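/- Let A, B be diagonal 2×2 complex matrices and let X, Y be invertible 2×2 complex matrices such that X*A*Y = diag(1, z₀) and X*B*Y = diag(z₁, 1) for some complex numbers z₀, z₁ with |z₀| < 1 and |z₁| < 1, and suppose A₁₁B₂₂ − A₂₂B₁₁ ≠ 0. Then either X and Y are both diagonal with |A₁₁| > |B₁₁|, |A₂₂| < |B₂₂|, A₁₁X₁₁Y₁₁ = 1, B₂₂X₂₂Y₂₂ = 1, or X and Y are both skew-diagonal with |A₁₁| < |B₁₁|, |A₂₂| > |B₂₂|, A₂₂X₁₂Y₂₁ = 1, B₁₁X₂₁Y₁₂ = 1. -/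

import Mathlib

/-!
For `i ≠ j` the vanishing `(i, j)` entries of `X * A * Y` and `X * B * Y` form a linear system
in the products `X i k * Y k j`, whose determinant is `A₁₁ B₂₂ - A₂₂ B₁₁`; so all these products
vanish, and invertibility of `X` and `Y` leaves only the diagonal and the skew-diagonal pattern.
The diagonal entries then read `a * t = 1` and `b * t = z` with `‖z‖ < 1`, whence `‖b‖ < ‖a‖`.
-/

open Matrix

theorem Matrix.isDiag_fin_two_iff {α : Type*} [Zero α] {A : Matrix (Fin 2) (Fin 2) α} :
    A.IsDiag ↔ A 0 1 = 0 ∧ A 1 0 = 0 := by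
  refine ⟨fun h => ⟨h (by decide), h (by decide)⟩, fun h i j hij => ?_⟩
  fin_cases i <;> fin_cases j <;> simp_all

theorem Matrix.IsDiag.mul_mul_apply {n α : Type*} [Fintype n] [CommSemiring α]
    {A : Matrix n n α} (hA : A.IsDiag) (X Y : Matrix n n α) (i j : n) :
    (X * A * Y) i j = ∑ k, A k k * (X i k * Y k j) := by
  classical
  conv_lhs => rw [← hA.diagonal_diag, mul_apply]
  simp only [mul_diagonal, diag_apply]
  exact Finset.sum_congr rfl fun k _ => by ring

theorem Matrix.apply_mul_apply_eq_zero_of_forall_mul_mul_apply_eq_zero {n R : Type*}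
    [Fintype n] [DecidableEq n] [CommRing R] [NoZeroDivisors R] {A : n → Matrix n n R}
    (hA : ∀ r, (A r).IsDiag) (hdet : (of fun r k => A r k k).det ≠ 0)
    {X Y : Matrix n n R} {i j : n} (h : ∀ r, (X * A r * Y) i j = 0) (k : n) :
    X i k * Y k j = 0 := by
  have hsys : (of fun r k => A r k k) *ᵥ (fun k => X i k * Y k j) = 0 := by
    ext r
    simp only [mulVec, dotProduct, of_apply, ← (hA r).mul_mul_apply, h, Pi.zero_apply]
  exact congr_fun (eq_zero_of_mulVec_eq_zero hdet hsys) k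

theorem Matrix.fin_two_diag_or_antidiag_of_apply_mul_apply_eq_zero {R : Type*} [CommRing R]
    [NoZeroDivisors R] {X Y : Matrix (Fin 2) (Fin 2) R} (hX : X.det ≠ 0) (hY : Y.det ≠ 0)
    (h : ∀ i j, i ≠ j → ∀ k, X i k * Y k j = 0) :
    (X 0 1 = 0 ∧ X 1 0 = 0 ∧ Y 0 1 = 0 ∧ Y 1 0 = 0) ∨
      (X 0 0 = 0 ∧ X 1 1 = 0 ∧ Y 0 0 = 0 ∧ Y 1 1 = 0) := by
  rw [det_fin_two] at hX hY
  rcases mul_eq_zero.mp (h 0 1 (by decide) 0) with h₁ | h₁ <;>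
    rcases mul_eq_zero.mp (h 0 1 (by decide) 1) with h₂ | h₂ <;>
    rcases mul_eq_zero.mp (h 1 0 (by decide) 0) with h₃ | h₃ <;>
    rcases mul_eq_zero.mp (h 1 0 (by decide) 1) with h₄ | h₄ <;>
    simp_all

theorem norm_lt_norm_of_mul_eq_one {𝕜 : Type*} [NormedDivisionRing 𝕜] {a b t : 𝕜}
    (ha : a * t = 1) (hb : ‖b * t‖ < 1) : ‖b‖ < ‖a‖ := by
  have ha0 : a ≠ 0 := left_ne_zero_of_mul_eq_one ha
  calc ‖b‖ = ‖b * t‖ * ‖a‖ := by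
        rw [← norm_mul, ← inv_eq_of_mul_eq_one_right ha, inv_mul_cancel_right₀ ha0]
    _ < ‖a‖ := mul_lt_of_lt_one_left (norm_pos_iff.mpr ha0) hb

theorem case_ii_dichotomy (A B X Y : Matrix (Fin 2) (Fin 2) ℂ) (z₀ z₁ : ℂ)
    (hA : A 0 1 = 0 ∧ A 1 0 = 0) (hB : B 0 1 = 0 ∧ B 1 0 = 0)
    (hX : IsUnit X) (hY : IsUnit Y)
    (hz₀ : ‖z₀‖ < 1) (hz₁ : ‖z₁‖ < 1)
    (h1 : X * A * Y = !![1, 0; 0, z₀]) (h2 : X * B * Y = !![z₁, 0; 0, 1])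
    (hdet : A 0 0 * B 1 1 - A 1 1 * B 0 0 ≠ 0) :
    ((X 0 1 = 0 ∧ X 1 0 = 0 ∧ Y 0 1 = 0 ∧ Y 1 0 = 0) ∧
      ‖(A 0 0)‖ > ‖(B 0 0)‖ ∧
      ‖(A 1 1)‖ < ‖(B 1 1)‖ ∧
      A 0 0 * X 0 0 * Y 0 0 = 1 ∧ B 1 1 * X 1 1 * Y 1 1 = 1) ∨
    ((X 0 0 = 0 ∧ X 1 1 = 0 ∧ Y 0 0 = 0 ∧ Y 1 1 = 0) ∧
      ‖(A 0 0)‖ < ‖(B 0 0)‖ ∧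
      ‖(A 1 1)‖ > ‖(B 1 1)‖ ∧
      A 1 1 * X 0 1 * Y 1 0 = 1 ∧ B 0 0 * X 1 0 * Y 0 1 = 1) := by
  have hAd : A.IsDiag := isDiag_fin_two_iff.mpr hA
  have hBd : B.IsDiag := isDiag_fin_two_iff.mpr hB
  have hAB : (X * A * Y).IsDiag ∧ (X * B * Y).IsDiag := by
    rw [h1, h2]
    exact ⟨isDiag_fin_two_iff.mpr ⟨rfl, rfl⟩, isDiag_fin_two_iff.mpr ⟨rfl, rfl⟩⟩
  have hrank : ∀ i j, i ≠ j → ∀ k, X i k * Y k j = 0 := fun i j hij =>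
    apply_mul_apply_eq_zero_of_forall_mul_mul_apply_eq_zero (A := ![A, B])
      (Fin.forall_fin_two.mpr ⟨hAd, hBd⟩) (by simpa [det_fin_two] using hdet)
      (Fin.forall_fin_two.mpr ⟨hAB.1 hij, hAB.2 hij⟩)
  have a00 := (hAd.mul_mul_apply X Y 0 0).symm.trans (congr_fun₂ h1 0 0)
  have a11 := (hAd.mul_mul_apply X Y 1 1).symm.trans (congr_fun₂ h1 1 1)
  have b00 := (hBd.mul_mul_apply X Y 0 0).symm.trans (congr_fun₂ h2 0 0)
  have b11 := (hBd.mul_mul_apply X Y 1 1).symm.trans (congr_fun₂ h2 1 1)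
  simp only [Fin.sum_univ_two, of_apply, cons_val', cons_val_zero, cons_val_one,
    cons_val_fin_one] at a00 a11 b00 b11
  rcases fin_two_diag_or_antidiag_of_apply_mul_apply_eq_zero
      ((isUnit_iff_isUnit_det X).mp hX).ne_zero ((isUnit_iff_isUnit_det Y).mp hY).ne_zero hrank
    with ⟨x01, x10, y01, y10⟩ | ⟨x00, x11, y00, y11⟩
  · simp only [x01, x10, y01, y10, mul_zero, add_zero, zero_add] at a00 a11 b00 b11
    exact Or.inl ⟨⟨x01, x10, y01, y10⟩, norm_lt_norm_of_mul_eq_one a00 (b00 ▸ hz₁),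
      norm_lt_norm_of_mul_eq_one b11 (a11 ▸ hz₀), by rw [mul_assoc, a00], by rw [mul_assoc, b11]⟩
  · simp only [x00, x11, y00, y11, mul_zero, add_zero, zero_add] at a00 a11 b00 b11
    exact Or.inr ⟨⟨x00, x11, y00, y11⟩, norm_lt_norm_of_mul_eq_one b11 (a11 ▸ hz₀),
      norm_lt_norm_of_mul_eq_one a00 (b00 ▸ hz₁), by rw [mul_assoc, a00], by rw [mul_assoc, b11]⟩
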